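/- In the mobile-catalyst construction with membrane structure [ [ ]_2 [ ]_3 ]_1, the SUB-simulation rule c l_i → (c, in)(l_i, in) followed by the membrane check rule c l_i → c l_i' (available only in membrane r+1) guarantees: the catalyst and the label object enter the same inner membrane, and if that membrane is not membrane r+1 then the rule l_i → # must fire and the computation never halts. -/

import Mathlib

attribute [local instance 5] Classical.propDecidable

/-- Targets: `here`, `out`, `in` (a non-deterministically chosen inner membrane). -/
inductive Tgt : Type
  | here | out | inn
deriving DecidableEq

/-- A rule of a P system with a mobile catalyst: non-cooperative `a → (v, tgt)`
(`cata = false`) or catalytic `c a → (c, tgt)(v, tgt)` (`cata = true`; the moving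
catalyst is part of `rhs`); all right-hand-side objects carry the same target. -/
structure MCRule (O : Type) where
  cata : Bool
  lhs : O
  rhs : Multiset O
  tgt : Tgt

/-- A P system with `n + 1` membranes (the skin, region `0`, containing the elementary
membranes `1, …, n`) and one mobile catalyst `cat`. -/
structure MCSystem (n : ℕ) (O : Type) where
  cat : O
  R : Fin (n+1) → Set (MCRule O)
  w0 : Fin (n+1) → Multiset O

variable {n : ℕ} {O : Type} [DecidableEq O]

/-- The multiset consumed by one application of `ρ`. -/
def mcLhs (c : O) (ρ : MCRule O) : Multiset O :=
  if ρ.cata then {c, ρ.lhs} else {ρ.lhs}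

/-- The destination region of the products of a rule applied in region `i` with
target `t` and chosen inner membrane `d`; `none` denotes the environment. -/
def mcDest (i : Fin (n+1)) (t : Tgt) (d : Fin (n+1)) : Option (Fin (n+1)) :=
  match t with
  | Tgt.here => some i
  | Tgt.out => if i = 0 then none else some 0
  | Tgt.inn => some d

/-- A configuration: the contents of the `n + 1` regions and of the environment. -/
abbrev MCConfig (n : ℕ) (O : Type) := (Fin (n+1) → Multiset O) × Multiset O

/-- One non-deterministic maximally parallel step: a multiset of rule applications
`(region, rule, chosen inner membrane)` such that no further rule is applicable
to the remaining objects of any region. -/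
def MCStep (Q : MCSystem n O) : MCConfig n O → MCConfig n O → Prop :=
  fun cfg cfg' => ∃ apps : Multiset (Fin (n+1) × MCRule O × Fin (n+1)),
    (let consAt : Fin (n+1) → Multiset O := fun i =>
       ((apps.filter (fun p => p.1 = i)).map (fun p => mcLhs Q.cat p.2.1)).sum
     let delivTo : Option (Fin (n+1)) → Multiset O := fun a =>
       ((apps.filter (fun p => mcDest p.1 p.2.1.tgt p.2.2 = a)).map
          (fun p => p.2.1.rhs)).sum
     apps ≠ 0 ∧
     (∀ p ∈ apps, p.2.1 ∈ Q.R p.1 ∧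
        (p.2.1.tgt = Tgt.inn → p.1 = 0 ∧ p.2.2 ≠ 0)) ∧
     (∀ i, consAt i ≤ cfg.1 i) ∧
     (∀ i, ¬ ∃ ρ ∈ Q.R i, mcLhs Q.cat ρ ≤ cfg.1 i - consAt i ∧
        (ρ.tgt = Tgt.inn → i = 0 ∧ 1 ≤ n)) ∧
     (∀ j, cfg'.1 j = cfg.1 j - consAt j + delivTo (some j)) ∧
     cfg'.2 = cfg.2 + delivTo none)

/-- No rule is applicable in any region. -/
def MCHalted (Q : MCSystem n O) (cfg : MCConfig n O) : Prop :=
  ∀ i, ¬ ∃ ρ ∈ Q.R i, mcLhs Q.cat ρ ≤ cfg.1 i ∧ (ρ.tgt = Tgt.inn → i = 0 ∧ 1 ≤ n)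

/-- `Ps(Q)`: Parikh vectors (w.r.t. the output symbols `a i`) of the environment
contents of halting computations. -/
def MCPs {k : ℕ} (Q : MCSystem n O) (a : Fin k → O) : Set (Fin k → ℕ) :=
  { v | ∃ cfg : MCConfig n O,
      Relation.ReflTransGen (MCStep Q) (Q.w0, 0) cfg ∧ MCHalted Q cfg ∧
      (∀ i, cfg.2.count (a i) = v i) ∧ (∀ x ∈ cfg.2, ∃ i, x = a i) }

/-- `N(Q)`: the numbers of objects sent to the environment in halting computations. -/
def MCN (Q : MCSystem n O) : Set ℕ :=
  { m | ∃ cfg : MCConfig n O,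
      Relation.ReflTransGen (MCStep Q) (Q.w0, 0) cfg ∧ MCHalted Q cfg ∧
      Multiset.card cfg.2 = m }

/-- `S` is recursively enumerable. -/
def REset {α : Type} [Primcodable α] (S : Set α) : Prop :=
  ∃ f : α →. Unit, Partrec f ∧ ∀ a, a ∈ S ↔ (f a).Dom

/-! ### The mobile-catalyst SUB gadget -/

/-- Objects of the gadget for `l_i : (SUB(r), l_j, l_k)`: the mobile catalyst `c`,
the labels `l_i, l_i', l_i'', l_i''', l_j, l_k`, the register symbols `a₁, a₂`
and the trap symbol `#`. -/
inductive J : Type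
  | c | li | li' | li'' | li''' | lj | lk | a1 | a2 | trap
deriving DecidableEq

open J

/-- The register symbol `a_r`. -/
def aR (r : ℕ) : J := if r = 1 then a1 else a2
/-- The register symbol `a_{3-r}`. -/
def aO (r : ℕ) : J := if r = 1 then a2 else a1
/-- The region of membrane `r + 1` (the skin is region `0`, membrane `2` is
region `1`, membrane `3` is region `2`). -/
def rightIdx (r : ℕ) : Fin 3 := if r = 1 then 1 else 2
/-- The region of the other inner membrane, `4 - r`. -/
def otherIdx (r : ℕ) : Fin 3 := if r = 1 then 2 else 1

/-- The rules of the gadget (restricted to the objects above), with membrane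
structure `[ [ ]₂ [ ]₃ ]₁`: skin rules `c l_i → (c, in)(l_i, in)`,
`c l_i''' → c l_j`, `l_i''' → #`, `# → #`; rules of membrane `r+1`:
`l_i → #`, `c l_i → c l_i'`, `l_i' → l_i''`, `c a_r → (c, out)`,
`c l_i'' → (c, out)(l_k, out)`, `l_i'' → (l_i''', out)`, `a_{3-r} → #`, `# → #`;
rules of membrane `4-r`: `l_i → #`, `c a_{3-r} → (c, out)`, `a_r → #`, `# → #`. -/
def QJ (r : ℕ) : MCSystem 2 J where
  cat := c
  R := fun i =>
    if i = 0 then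
      {⟨true, li, {c, li}, Tgt.inn⟩,
       ⟨true, li''', {c, lj}, Tgt.here⟩,
       ⟨false, li''', {trap}, Tgt.here⟩,
       ⟨false, trap, {trap}, Tgt.here⟩}
    else if i = rightIdx r then
      {⟨false, li, {trap}, Tgt.here⟩,
       ⟨true, li, {c, li'}, Tgt.here⟩,
       ⟨false, li', {li''}, Tgt.here⟩,
       ⟨true, aR r, {c}, Tgt.out⟩,
       ⟨true, li'', {c, lk}, Tgt.out⟩,
       ⟨false, li'', {li'''}, Tgt.out⟩,
       ⟨false, aO r, {trap}, Tgt.here⟩,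
       ⟨false, trap, {trap}, Tgt.here⟩}
    else
      {⟨false, li, {trap}, Tgt.here⟩,
       ⟨true, aO r, {c}, Tgt.out⟩,
       ⟨false, aR r, {trap}, Tgt.here⟩,
       ⟨false, trap, {trap}, Tgt.here⟩}
  w0 := fun i => if i = 0 then {c, li} else 0


/-!
In the starting configuration the inner membranes hold only register symbols, and every rule
there needs the catalyst or the other register symbol, while the skin holds exactly `c l_i`.
So every rule application of the first step is `c l_i → (c, in)(l_i, in)` into some inner
membrane `j`, which therefore receives both `c` and `l_i`. In the wrong membrane `4 - r` the only
rule consuming `l_i` is `l_i → #`, so maximal parallelism forces `#` in the next step; and since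
`l_i` and `#` are consumed there only by rules that put `#` back into the same membrane, one of
them stays there forever, keeping `l_i → #` or `# → #` applicable.
-/

def Applicable (Q : MCSystem n O) (i : Fin (n+1)) (w : Multiset O) (ρ : MCRule O) : Prop :=
  ρ ∈ Q.R i ∧ mcLhs Q.cat ρ ≤ w ∧ (ρ.tgt = Tgt.inn → i = 0 ∧ 1 ≤ n)

def consumedAt (Q : MCSystem n O) (apps : Multiset (Fin (n+1) × MCRule O × Fin (n+1)))
    (i : Fin (n+1)) : Multiset O :=
  ((apps.filter (fun p => p.1 = i)).map (fun p => mcLhs Q.cat p.2.1)).sum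

def deliveredTo (apps : Multiset (Fin (n+1) × MCRule O × Fin (n+1)))
    (a : Option (Fin (n+1))) : Multiset O :=
  ((apps.filter (fun p => mcDest p.1 p.2.1.tgt p.2.2 = a)).map (fun p => p.2.1.rhs)).sum

structure MCStepVia (Q : MCSystem n O) (apps : Multiset (Fin (n+1) × MCRule O × Fin (n+1)))
    (cfg cfg' : MCConfig n O) : Prop where
  ne_zero : apps ≠ 0
  valid : ∀ p ∈ apps, p.2.1 ∈ Q.R p.1 ∧ (p.2.1.tgt = Tgt.inn → p.1 = 0 ∧ p.2.2 ≠ 0)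
  consumedAt_le : ∀ i, consumedAt Q apps i ≤ cfg.1 i
  maximal : ∀ i, ¬ ∃ ρ, Applicable Q i (cfg.1 i - consumedAt Q apps i) ρ
  update : ∀ j, cfg'.1 j = cfg.1 j - consumedAt Q apps j + deliveredTo apps (some j)
  environment : cfg'.2 = cfg.2 + deliveredTo apps none

theorem mem_sub_of_mem_of_not_mem {α : Type*} [DecidableEq α] {a : α} {s t : Multiset α}
    (hs : a ∈ s) (ht : a ∉ t) : a ∈ s - t := by
  rw [Multiset.mem_sub, Multiset.count_eq_zero.2 ht]
  exact Multiset.count_pos.2 hs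

section MCStepVia

variable {Q : MCSystem n O} {apps : Multiset (Fin (n+1) × MCRule O × Fin (n+1))}
  {cfg cfg' : MCConfig n O}

theorem mcStep_iff_exists_mcStepVia : MCStep Q cfg cfg' ↔ ∃ apps, MCStepVia Q apps cfg cfg' :=
  ⟨fun ⟨apps, h₁, h₂, h₃, h₄, h₅, h₆⟩ => ⟨apps, h₁, h₂, h₃, h₄, h₅, h₆⟩,
   fun ⟨apps, h₁, h₂, h₃, h₄, h₅, h₆⟩ => ⟨apps, h₁, h₂, h₃, h₄, h₅, h₆⟩⟩

theorem exists_mcStep_of (h₁ : apps ≠ 0)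
    (h₂ : ∀ p ∈ apps, p.2.1 ∈ Q.R p.1 ∧ (p.2.1.tgt = Tgt.inn → p.1 = 0 ∧ p.2.2 ≠ 0))
    (h₃ : ∀ i, consumedAt Q apps i ≤ cfg.1 i)
    (h₄ : ∀ i, ¬ ∃ ρ, Applicable Q i (cfg.1 i - consumedAt Q apps i) ρ) :
    ∃ cfg', MCStep Q cfg cfg' :=
  ⟨(fun j => cfg.1 j - consumedAt Q apps j + deliveredTo apps (some j),
      cfg.2 + deliveredTo apps none),
    mcStep_iff_exists_mcStepVia.2 ⟨apps, h₁, h₂, h₃, h₄, fun _ => rfl, rfl⟩⟩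

omit [DecidableEq O] in
theorem Applicable.mono {i : Fin (n+1)} {w w' : Multiset O} {ρ : MCRule O}
    (h : Applicable Q i w ρ) (hw : w ≤ w') : Applicable Q i w' ρ :=
  ⟨h.1, h.2.1.trans hw, h.2.2⟩

omit [DecidableEq O] in
theorem mcLhs_ne_zero (c : O) (ρ : MCRule O) : mcLhs c ρ ≠ 0 := by
  unfold mcLhs; split <;> simp

omit [DecidableEq O] in
theorem mem_consumedAt {i : Fin (n+1)} {x : O} :
    x ∈ consumedAt Q apps i ↔ ∃ p ∈ apps, p.1 = i ∧ x ∈ mcLhs Q.cat p.2.1 :=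
  Multiset.mem_bind.trans (by simp only [Multiset.mem_filter, and_assoc])

omit [DecidableEq O] in
theorem mcLhs_le_consumedAt {p : Fin (n+1) × MCRule O × Fin (n+1)} (hp : p ∈ apps) :
    mcLhs Q.cat p.2.1 ≤ consumedAt Q apps p.1 := by
  unfold consumedAt
  apply Multiset.le_sum_of_mem
  exact Multiset.mem_map.2 ⟨p, Multiset.mem_filter.2 ⟨hp, rfl⟩, rfl⟩

omit [DecidableEq O] in
theorem rhs_le_deliveredTo {p : Fin (n+1) × MCRule O × Fin (n+1)} (hp : p ∈ apps)
    {a : Option (Fin (n+1))} (ha : mcDest p.1 p.2.1.tgt p.2.2 = a) :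
    p.2.1.rhs ≤ deliveredTo apps a := by
  unfold deliveredTo
  apply Multiset.le_sum_of_mem
  exact Multiset.mem_map.2 ⟨p, Multiset.mem_filter.2 ⟨hp, ha⟩, rfl⟩

omit [DecidableEq O] in
theorem consumedAt_singleton (a : Fin (n+1) × MCRule O × Fin (n+1)) (i : Fin (n+1)) :
    consumedAt Q {a} i = if a.1 = i then mcLhs Q.cat a.2.1 else 0 := by
  by_cases h : a.1 = i <;> simp [consumedAt, Multiset.filter_singleton, h]

namespace MCStepVia

theorem mcLhs_le (h : MCStepVia Q apps cfg cfg') {p : Fin (n+1) × MCRule O × Fin (n+1)}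
    (hp : p ∈ apps) : mcLhs Q.cat p.2.1 ≤ cfg.1 p.1 :=
  (mcLhs_le_consumedAt hp).trans (h.consumedAt_le p.1)

theorem rhs_le (h : MCStepVia Q apps cfg cfg') {p : Fin (n+1) × MCRule O × Fin (n+1)}
    (hp : p ∈ apps) {j : Fin (n+1)} (hj : mcDest p.1 p.2.1.tgt p.2.2 = some j) :
    p.2.1.rhs ≤ cfg'.1 j := by
  rw [h.update j]
  exact (rhs_le_deliveredTo hp hj).trans le_add_self

theorem mem_of_not_mem_consumedAt (h : MCStepVia Q apps cfg cfg') {i : Fin (n+1)} {x : O}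
    (hx : x ∈ cfg.1 i) (hc : x ∉ consumedAt Q apps i) : x ∈ cfg'.1 i := by
  rw [h.update i]
  exact Multiset.mem_add.2 (Or.inl (mem_sub_of_mem_of_not_mem hx hc))

theorem exists_mem_of_mem_consumedAt (h : MCStepVia Q apps cfg cfg') {i : Fin (n+1)} {x : O}
    (hx : x ∈ consumedAt Q apps i) (S : Set O)
    (hS : ∀ ρ ∈ Q.R i, x ∈ mcLhs Q.cat ρ → ρ.tgt = Tgt.here ∧ ∃ y ∈ S, y ∈ ρ.rhs) :
    ∃ y ∈ S, y ∈ cfg'.1 i := by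
  obtain ⟨p, hp, rfl, hxp⟩ := mem_consumedAt.1 hx
  obtain ⟨htgt, y, hyS, hy⟩ := hS _ (h.valid p hp).1 hxp
  exact ⟨y, hyS, Multiset.mem_of_le (h.rhs_le hp (by rw [htgt]; rfl)) hy⟩

theorem exists_mem_of_closed (h : MCStepVia Q apps cfg cfg') {i : Fin (n+1)} (S : Set O)
    (hS : ∃ x ∈ S, x ∈ cfg.1 i)
    (hclosed : ∀ ρ ∈ Q.R i, ∀ x ∈ S, x ∈ mcLhs Q.cat ρ → ρ.tgt = Tgt.here ∧ ∃ y ∈ S, y ∈ ρ.rhs) :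
    ∃ y ∈ S, y ∈ cfg'.1 i := by
  obtain ⟨x, hxS, hx⟩ := hS
  by_cases hc : x ∈ consumedAt Q apps i
  · exact h.exists_mem_of_mem_consumedAt hc S fun ρ hρ => hclosed ρ hρ x hxS
  · exact ⟨x, hxS, h.mem_of_not_mem_consumedAt hx hc⟩

theorem mem_of_forced (h : MCStepVia Q apps cfg cfg') {i : Fin (n+1)} {x y : O}
    (hx : x ∈ cfg.1 i) {ρ₀ : MCRule O} (hρ₀ : Applicable Q i {x} ρ₀)
    (hprod : ∀ ρ ∈ Q.R i, x ∈ mcLhs Q.cat ρ → ρ.tgt = Tgt.here ∧ y ∈ ρ.rhs) :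
    y ∈ cfg'.1 i := by
  by_cases hc : x ∈ consumedAt Q apps i
  · simpa using h.exists_mem_of_mem_consumedAt hc {y} (by simpa using hprod)
  · have hleft : {x} ≤ cfg.1 i - consumedAt Q apps i :=
      Multiset.singleton_le.2 (mem_sub_of_mem_of_not_mem hx hc)
    exact absurd ⟨ρ₀, hρ₀.mono hleft⟩ (h.maximal i)

end MCStepVia
end MCStepVia

section SubGadget

variable {r p q : ℕ}

theorem rightIdx_ne_zero (r : ℕ) : rightIdx r ≠ 0 := by
  unfold rightIdx; split_ifs <;> decide

theorem otherIdx_ne_zero (r : ℕ) : otherIdx r ≠ 0 := by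
  unfold otherIdx; split_ifs <;> decide

theorem otherIdx_ne_rightIdx (r : ℕ) : otherIdx r ≠ rightIdx r := by
  unfold otherIdx rightIdx; split_ifs <;> decide

theorem eq_otherIdx_of_ne {j : Fin 3} (h0 : j ≠ 0) (hr : j ≠ rightIdx r) : j = otherIdx r := by
  unfold otherIdx rightIdx at *; split_ifs at * <;> fin_cases j <;> simp_all

@[simp]
theorem QJ_cat (r : ℕ) : (QJ r).cat = c := rfl

def enterRule : MCRule J := ⟨true, li, {c, li}, Tgt.inn⟩

theorem QJ_R_zero (r : ℕ) : (QJ r).R 0 =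
    {enterRule, ⟨true, li''', {c, lj}, Tgt.here⟩, ⟨false, li''', {trap}, Tgt.here⟩,
      ⟨false, trap, {trap}, Tgt.here⟩} := rfl

theorem QJ_R_rightIdx (r : ℕ) : (QJ r).R (rightIdx r) =
    {⟨false, li, {trap}, Tgt.here⟩, ⟨true, li, {c, li'}, Tgt.here⟩, ⟨false, li', {li''}, Tgt.here⟩,
      ⟨true, aR r, {c}, Tgt.out⟩, ⟨true, li'', {c, lk}, Tgt.out⟩,
      ⟨false, li'', {li'''}, Tgt.out⟩, ⟨false, aO r, {trap}, Tgt.here⟩,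
      ⟨false, trap, {trap}, Tgt.here⟩} := by
  simp [QJ, rightIdx_ne_zero]

theorem QJ_R_otherIdx (r : ℕ) : (QJ r).R (otherIdx r) =
    {⟨false, li, {trap}, Tgt.here⟩, ⟨true, aO r, {c}, Tgt.out⟩, ⟨false, aR r, {trap}, Tgt.here⟩,
      ⟨false, trap, {trap}, Tgt.here⟩} := by
  simp [QJ, otherIdx_ne_zero, otherIdx_ne_rightIdx]

def subStartRegions (r p q : ℕ) : Fin 3 → Multiset J := fun i =>
  if i = 0 then {c, li}
  else if i = rightIdx r then Multiset.replicate p (aR r)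
  else Multiset.replicate q (aO r)

theorem subStartRegions_rightIdx :
    subStartRegions r p q (rightIdx r) = Multiset.replicate p (aR r) := by
  simp [subStartRegions, rightIdx_ne_zero]

theorem subStartRegions_otherIdx :
    subStartRegions r p q (otherIdx r) = Multiset.replicate q (aO r) := by
  simp [subStartRegions, otherIdx_ne_zero, otherIdx_ne_rightIdx]

theorem eq_enterRule_of_mcLhs_le {ρ : MCRule J} (hρ : ρ ∈ (QJ r).R 0)
    (hle : mcLhs c ρ ≤ {c, li}) : ρ = enterRule := by
  rw [QJ_R_zero] at hρ
  rcases hρ with rfl | rfl | rfl | rfl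
  · rfl
  all_goals exact absurd hle (by decide)

theorem exists_mem_mcLhs_ne_aR : ∀ ρ ∈ (QJ r).R (rightIdx r), ∃ x ∈ mcLhs c ρ, x ≠ aR r := by
  rw [QJ_R_rightIdx]
  rintro ρ (rfl | rfl | rfl | rfl | rfl | rfl | rfl | rfl) <;> simp [mcLhs, aR, aO] <;>
    split_ifs <;> decide

theorem exists_mem_mcLhs_ne_aO : ∀ ρ ∈ (QJ r).R (otherIdx r), ∃ x ∈ mcLhs c ρ, x ≠ aO r := by
  rw [QJ_R_otherIdx]
  rintro ρ (rfl | rfl | rfl | rfl) <;> simp [mcLhs, aR, aO] <;> split_ifs <;> decide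

theorem not_mcLhs_le_subStartRegions {i : Fin 3} (hi : i ≠ 0) {ρ : MCRule J}
    (hρ : ρ ∈ (QJ r).R i) : ¬ mcLhs c ρ ≤ subStartRegions r p q i := by
  intro hle
  by_cases hiR : i = rightIdx r
  · subst hiR
    obtain ⟨x, hx, hne⟩ := exists_mem_mcLhs_ne_aR ρ hρ
    rw [subStartRegions_rightIdx] at hle
    exact hne (Multiset.eq_of_mem_replicate (Multiset.mem_of_le hle hx))
  · obtain rfl := eq_otherIdx_of_ne hi hiR
    obtain ⟨x, hx, hne⟩ := exists_mem_mcLhs_ne_aO ρ hρ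
    rw [subStartRegions_otherIdx] at hle
    exact hne (Multiset.eq_of_mem_replicate (Multiset.mem_of_le hle hx))

theorem exists_mcStep_of_subStartRegions {cfg : MCConfig 2 J}
    (hcfg : cfg.1 = subStartRegions r p q) : ∃ cfg', MCStep (QJ r) cfg cfg' := by
  refine exists_mcStep_of (apps := {(0, enterRule, rightIdx r)}) (Multiset.singleton_ne_zero _)
    ?_ ?_ ?_
  · simp only [Multiset.mem_singleton]
    rintro _ rfl
    exact ⟨by simp [QJ_R_zero], fun _ => ⟨rfl, rightIdx_ne_zero r⟩⟩
  · intro i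
    rw [consumedAt_singleton]
    split_ifs with h
    · subst h
      rw [hcfg]
      rfl
    · exact Multiset.zero_le _
  · rintro i ⟨ρ, hρ, hle, -⟩
    rw [consumedAt_singleton] at hle
    split_ifs at hle with h
    · subst h
      have hempty : cfg.1 0 - mcLhs c enterRule = 0 := by rw [hcfg]; rfl
      exact mcLhs_ne_zero c ρ (Multiset.le_zero.1 (hempty ▸ hle))
    · rw [Multiset.sub_zero, hcfg] at hle
      exact not_mcLhs_le_subStartRegions (Ne.symm h) hρ hle

theorem exists_inner_of_mcStep_subStartRegions {cfg cfg' : MCConfig 2 J}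
    (hcfg : cfg.1 = subStartRegions r p q) (hst : MCStep (QJ r) cfg cfg') :
    ∃ j ≠ 0, c ∈ cfg'.1 j ∧ li ∈ cfg'.1 j := by
  obtain ⟨apps, h⟩ := mcStep_iff_exists_mcStepVia.1 hst
  obtain ⟨a, ha⟩ := Multiset.exists_mem_of_ne_zero h.ne_zero
  have hρ := (h.valid a ha).1
  have hle := h.mcLhs_le ha
  rw [hcfg] at hle
  have ha0 : a.1 = 0 := by
    by_contra ha0
    exact not_mcLhs_le_subStartRegions ha0 hρ hle
  rw [ha0] at hρ hle
  have haρ : a.2.1 = enterRule := eq_enterRule_of_mcLhs_le hρ hle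
  have hd : a.2.2 ≠ 0 := ((h.valid a ha).2 (by rw [haρ]; rfl)).2
  have hdeliv : {c, li} ≤ cfg'.1 a.2.2 := by
    simpa [haρ, enterRule] using h.rhs_le ha (j := a.2.2) (by rw [haρ]; rfl)
  exact ⟨a.2.2, hd, Multiset.mem_of_le hdeliv (by simp), Multiset.mem_of_le hdeliv (by simp)⟩

theorem trap_mem_otherIdx_of_mcStep {cfg cfg' : MCConfig 2 J} (hst : MCStep (QJ r) cfg cfg')
    (hli : li ∈ cfg.1 (otherIdx r)) : trap ∈ cfg'.1 (otherIdx r) := by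
  obtain ⟨apps, h⟩ := mcStep_iff_exists_mcStepVia.1 hst
  refine h.mem_of_forced hli (ρ₀ := ⟨false, li, {trap}, Tgt.here⟩)
    ⟨by simp [QJ_R_otherIdx], le_rfl, by simp⟩ ?_
  rw [QJ_R_otherIdx]
  rintro ρ (rfl | rfl | rfl | rfl) hx <;> simp [mcLhs, aR, aO] at hx ⊢
  split_ifs at hx

theorem li_trap_closed_otherIdx : ∀ ρ ∈ (QJ r).R (otherIdx r), ∀ x ∈ ({li, trap} : Set J),
    x ∈ mcLhs c ρ → ρ.tgt = Tgt.here ∧ ∃ y ∈ ({li, trap} : Set J), y ∈ ρ.rhs := by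
  rw [QJ_R_otherIdx]
  rintro ρ (rfl | rfl | rfl | rfl) x (rfl | rfl) hx <;> simp [mcLhs, aR, aO] at hx ⊢ <;>
    split_ifs at hx

theorem not_mcHalted_of_li_mem_otherIdx {cfg z : MCConfig 2 J}
    (hz : Relation.ReflTransGen (MCStep (QJ r)) cfg z) (hli : li ∈ cfg.1 (otherIdx r)) :
    ¬ MCHalted (QJ r) z := by
  have hinv : ∃ x ∈ ({li, trap} : Set J), x ∈ z.1 (otherIdx r) := by
    induction hz with
    | refl => exact ⟨li, by simp, hli⟩
    | tail _ hst ih =>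
      obtain ⟨apps, h⟩ := mcStep_iff_exists_mcStepVia.1 hst
      exact h.exists_mem_of_closed _ ih li_trap_closed_otherIdx
  intro hH
  obtain ⟨x, hx, hxz⟩ := hinv
  have hrule : ⟨false, x, {trap}, Tgt.here⟩ ∈ (QJ r).R (otherIdx r) := by
    rcases hx with rfl | rfl <;> simp [QJ_R_otherIdx]
  exact hH (otherIdx r) ⟨_, hrule, by simpa [mcLhs] using hxz, by simp⟩

end SubGadget

theorem statement11_general (r : ℕ) (p q : ℕ) (e : Multiset J)
    (cfg : MCConfig 2 J)
    (hcfg : cfg = (fun i =>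
        if i = 0 then {c, li}
        else if i = rightIdx r then Multiset.replicate p (aR r)
        else Multiset.replicate q (aO r), e)) :
    (∃ cfg', MCStep (QJ r) cfg cfg') ∧
    ∀ cfg', MCStep (QJ r) cfg cfg' →
      ∃ j : Fin 3, j ≠ 0 ∧ c ∈ cfg'.1 j ∧ li ∈ cfg'.1 j ∧
        (j ≠ rightIdx r →
          (∀ z, MCStep (QJ r) cfg' z → trap ∈ z.1 j) ∧
          (∀ z, Relation.ReflTransGen (MCStep (QJ r)) cfg' z →
            ¬ MCHalted (QJ r) z)) := by
  have hstart : cfg.1 = subStartRegions r p q := by rw [hcfg]; rfl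
  refine ⟨exists_mcStep_of_subStartRegions hstart, fun cfg' hst => ?_⟩
  obtain ⟨j, hj0, hc, hli⟩ := exists_inner_of_mcStep_subStartRegions hstart hst
  refine ⟨j, hj0, hc, hli, fun hjr => ?_⟩
  obtain rfl := eq_otherIdx_of_ne hj0 hjr
  exact ⟨fun _ hz => trap_mem_otherIdx_of_mcStep hz hli,
    fun _ hz => not_mcHalted_of_li_mem_otherIdx hz hli⟩

/-- in the mobile-catalyst construction, the rule
`c l_i → (c, in)(l_i, in)` sends the catalyst and the label object to the *same*
inner membrane, and if that membrane is not membrane `r + 1`, then `l_i → #` must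
fire there in the next step and the computation can never halt. -/
theorem statement11 (r : ℕ) (hr : r = 1 ∨ r = 2) (p q : ℕ) (e : Multiset J)
    (cfg : MCConfig 2 J)
    (hcfg : cfg = (fun i =>
        if i = 0 then {c, li}
        else if i = rightIdx r then Multiset.replicate p (aR r)
        else Multiset.replicate q (aO r), e)) :
    (∃ cfg', MCStep (QJ r) cfg cfg') ∧
    ∀ cfg', MCStep (QJ r) cfg cfg' →
      ∃ j : Fin 3, j ≠ 0 ∧ c ∈ cfg'.1 j ∧ li ∈ cfg'.1 j ∧
        (j ≠ rightIdx r →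
          (∀ z, MCStep (QJ r) cfg' z → trap ∈ z.1 j) ∧
          (∀ z, Relation.ReflTransGen (MCStep (QJ r)) cfg' z →
            ¬ MCHalted (QJ r) z)) :=
  statement11_general r p q e cfg hcfg
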